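/- There is a unique way to assign to each loopless matroid M on a finite ground set a polynomial P_M(t) ∈ ℤ[t] such that: (1) if rk M = 0 then P_M(t) = 1; (2) if rk M > 0 then deg P_M(t) < (rk M)/2; and (3) for every M, t^{rk M} P_M(t^{-1}) = ∑_{F∈L(M)} χ_{M_F}(t) P_{M^F}(t), the sum being over all flats F of M. -/

import Mathlib

open scoped Classical

/-- A matroid on a finite ground set, presented by its rank function
(normalized, monotone, submodular, with unit increase). -/
structure FinMatroid where
  E : Type
  fintypeE : Fintype E
  deceqE : DecidableEq E
  rk : Finset E → ℕ
  rk_empty : rk ∅ = 0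
  rk_mono : ∀ ⦃S T : Finset E⦄, S ⊆ T → rk S ≤ rk T
  rk_submod : ∀ S T : Finset E, rk (S ∪ T) + rk (S ∩ T) ≤ rk S + rk T
  rk_insert_le : ∀ (S : Finset E) (x : E), rk (insert x S) ≤ rk S + 1

attribute [instance] FinMatroid.fintypeE FinMatroid.deceqE

namespace FinMatroid

/-- The rank of the matroid: the rank of the full ground set. -/
noncomputable def rank (M : FinMatroid) : ℕ := M.rk Finset.univ

/-- A flat: a set such that adding any new element increases the rank. -/
def IsFlat (M : FinMatroid) (F : Finset M.E) : Prop :=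
  ∀ x ∉ F, M.rk (insert x F) ≠ M.rk F

/-- The (finite) collection of flats of `M`. -/
noncomputable def flats (M : FinMatroid) : Finset (Finset M.E) :=
  Finset.univ.filter M.IsFlat

/-- A matroid is loopless if every singleton has rank 1. -/
def Loopless (M : FinMatroid) : Prop := ∀ x : M.E, M.rk {x} = 1

/-- The Möbius function of the lattice of flats of `M` (extended by the usual
recursion; `mu A B = 0` unless `A ⊆ B`). -/
noncomputable def mu (M : FinMatroid) (A B : Finset M.E) : ℤ :=
  if A = B then 1
  else -∑ G ∈ (M.flats.filter (fun G => A ⊆ G ∧ G ⊂ B)).attach,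
        M.mu A G.1
termination_by B.card
decreasing_by
  exact Finset.card_lt_card (Finset.mem_filter.mp G.2).2.2

/-- The characteristic polynomial `χ_M(t) = ∑_{F flat} μ(∅,F) t^(rk M - rk F)`. -/
noncomputable def charPoly (M : FinMatroid) : Polynomial ℤ :=
  ∑ F ∈ M.flats, Polynomial.C (M.mu ∅ F) * Polynomial.X ^ (M.rank - M.rk F)

/-- The localization `M_F`: the restriction of `M` to the set `F`. -/
noncomputable def localization (M : FinMatroid) (F : Finset M.E) : FinMatroid where
  E := {x : M.E // x ∈ F}
  fintypeE := inferInstance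
  deceqE := inferInstance
  rk S := M.rk (S.map (Function.Embedding.subtype _))
  rk_empty := by simpa using M.rk_empty
  rk_mono := fun S T h => M.rk_mono (Finset.map_subset_map.mpr h)
  rk_submod := fun S T => by
    try dsimp only
    rw [Finset.map_union, Finset.map_inter]
    exact M.rk_submod _ _
  rk_insert_le := fun S x => by
    try dsimp only
    rw [Finset.map_insert]
    exact M.rk_insert_le _ _

/-- The restriction `M^F` (the contraction of `M` by the flat `F`), a matroid on
the complement of `F`. -/
noncomputable def restrictionAt (M : FinMatroid) (F : Finset M.E) : FinMatroid where
  E := {x : M.E // x ∉ F}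
  fintypeE := inferInstance
  deceqE := inferInstance
  rk S := M.rk (S.map (Function.Embedding.subtype _) ∪ F) - M.rk F
  rk_empty := by simp
  rk_mono := fun S T h =>
    Nat.sub_le_sub_right
      (M.rk_mono (Finset.union_subset_union_left (Finset.map_subset_map.mpr h))) _
  rk_submod := fun S T => by
    try dsimp only
    set e := Function.Embedding.subtype (fun x : M.E => x ∉ F) with he
    have h1 : (S ∪ T).map e ∪ F = (S.map e ∪ F) ∪ (T.map e ∪ F) := by
      rw [Finset.map_union, Finset.union_union_distrib_right]
    have h2 : (S ∩ T).map e ∪ F = (S.map e ∪ F) ∩ (T.map e ∪ F) := by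
      rw [Finset.map_inter, Finset.inter_union_distrib_right]
    have h3 := M.rk_submod (S.map e ∪ F) (T.map e ∪ F)
    have h4 : M.rk F ≤ M.rk (S.map e ∪ F) := M.rk_mono Finset.subset_union_right
    have h5 : M.rk F ≤ M.rk (T.map e ∪ F) := M.rk_mono Finset.subset_union_right
    have h6 : M.rk F ≤ M.rk ((S ∩ T).map e ∪ F) := M.rk_mono Finset.subset_union_right
    have h7 : M.rk F ≤ M.rk ((S ∪ T).map e ∪ F) := M.rk_mono Finset.subset_union_right
    rw [h1] at h7 ⊢
    rw [h2] at h6 ⊢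
    omega
  rk_insert_le := fun S x => by
    try dsimp only
    set e := Function.Embedding.subtype (fun x : M.E => x ∉ F) with he
    have h1 : (insert x S).map e ∪ F = insert (e x) (S.map e ∪ F) := by
      rw [Finset.map_insert, Finset.insert_union]
    have h2 := M.rk_insert_le (S.map e ∪ F) (e x)
    have h3 : M.rk F ≤ M.rk (S.map e ∪ F) := M.rk_mono Finset.subset_union_right
    rw [h1]
    omega

end FinMatroid

attribute [reducible] FinMatroid.restrictionAt FinMatroid.localization

namespace FinMatroid

/-- `P` is a Kazhdan–Lusztig family: it assigns to each loopless matroid a polynomial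
satisfying the three defining conditions of the Kazhdan–Lusztig polynomial.
Condition (2), `deg P_M < rk M / 2`, is expressed by the vanishing of all coefficients
in degrees `i` with `2 i ≥ rk M`; condition (3), the Laurent-polynomial identity
`t^(rk M) P_M(t⁻¹) = ∑_F χ_{M_F}(t) P_{M^F}(t)`, is expressed via evaluation at every
nonzero rational number. -/
def IsKLFamily (P : FinMatroid → Polynomial ℤ) : Prop :=
  (∀ M : FinMatroid, M.Loopless → M.rank = 0 → P M = 1) ∧
  (∀ M : FinMatroid, M.Loopless → 0 < M.rank →
      ∀ i : ℕ, M.rank ≤ 2 * i → (P M).coeff i = 0) ∧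
  (∀ M : FinMatroid, M.Loopless → ∀ q : ℚ, q ≠ 0 →
      q ^ M.rank * Polynomial.aeval q⁻¹ (P M) =
        ∑ F ∈ M.flats,
          Polynomial.aeval q ((M.localization F).charPoly) *
            Polynomial.aeval q (P (M.restrictionAt F)))

end FinMatroid

namespace FinMatroid

open Polynomial Finset

variable {M : FinMatroid}

lemma mem_flats {F : Finset M.E} : F ∈ M.flats ↔ M.IsFlat F := by
  simp [flats]

lemma rk_le_rank (S : Finset M.E) : M.rk S ≤ M.rank := M.rk_mono (Finset.subset_univ S)

lemma rk_lt_of_ssubset {F G : Finset M.E} (hF : M.IsFlat F) (h : F ⊂ G) :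
    M.rk F < M.rk G := by
  obtain ⟨x, hxG, hxF⟩ := Finset.exists_of_ssubset h
  have h1 := hF x hxF
  have h2 : insert x F ⊆ G := Finset.insert_subset hxG h.subset
  have h3 := M.rk_mono h2
  have h4 := M.rk_mono (Finset.subset_insert x F)
  omega

lemma empty_isFlat (h : M.Loopless) : M.IsFlat ∅ := by
  intro x _
  have hx := h x
  show M.rk {x} ≠ M.rk ∅
  rw [M.rk_empty, hx]
  omega

lemma empty_mem_flats (h : M.Loopless) : ∅ ∈ M.flats := mem_flats.mpr (empty_isFlat h)

lemma mu_self (A : Finset M.E) : M.mu A A = 1 := by rw [mu]; simp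

lemma mu_of_ne {A B : Finset M.E} (h : A ≠ B) :
    M.mu A B = -∑ G ∈ M.flats.filter (fun G => A ⊆ G ∧ G ⊂ B), M.mu A G := by
  rw [mu, if_neg h, Finset.sum_attach]

lemma sum_mu {A B : Finset M.E} (hA : A ∈ M.flats) (hB : B ∈ M.flats) (hAB : A ⊆ B) :
    ∑ E ∈ M.flats.filter (fun E => A ⊆ E ∧ E ⊆ B), M.mu A E = if A = B then 1 else 0 := by
  by_cases h : A = B
  · subst h
    rw [if_pos rfl]
    have hs : M.flats.filter (fun E => A ⊆ E ∧ E ⊆ A) = {A} := by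
      ext E
      simp only [Finset.mem_filter, Finset.mem_singleton]
      constructor
      · rintro ⟨_, h1, h2⟩; exact Finset.Subset.antisymm h2 h1
      · rintro rfl; exact ⟨hA, subset_rfl, subset_rfl⟩
    rw [hs, Finset.sum_singleton, mu_self]
  · rw [if_neg h]
    have hsplit : M.flats.filter (fun E => A ⊆ E ∧ E ⊆ B)
        = insert B (M.flats.filter (fun E => A ⊆ E ∧ E ⊂ B)) := by
      ext E
      simp only [Finset.mem_filter, Finset.mem_insert]
      constructor
      · rintro ⟨hE, h1, h2⟩
        rcases eq_or_ne E B with rfl | hne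
        · exact Or.inl rfl
        · exact Or.inr ⟨hE, h1, lt_of_le_of_ne h2 hne⟩
      · rintro (rfl | ⟨hE, h1, h2⟩)
        · exact ⟨hB, hAB, subset_rfl⟩
        · exact ⟨hE, h1, h2.subset⟩
    rw [hsplit, Finset.sum_insert (by
      intro hmem
      exact absurd (Finset.mem_filter.mp hmem).2.2 (fun a => a.2 a.1))]
    rw [mu_of_ne h]
    exact neg_add_cancel _

/-- The "right-sided" Möbius function, defined by the dual recursion. -/
noncomputable def mu' (M : FinMatroid) (A B : Finset M.E) : ℤ :=
  if A = B then 1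
  else -∑ G ∈ (M.flats.filter (fun G => A ⊂ G ∧ G ⊆ B)).attach,
        M.mu' G.1 B
termination_by B.card - A.card
decreasing_by
  have h1 := Finset.card_lt_card (Finset.mem_filter.mp G.2).2.1
  have h2 := Finset.card_le_card (Finset.mem_filter.mp G.2).2.2
  omega

lemma mu'_self (A : Finset M.E) : M.mu' A A = 1 := by rw [mu']; simp

lemma mu'_of_ne {A B : Finset M.E} (h : A ≠ B) :
    M.mu' A B = -∑ G ∈ M.flats.filter (fun G => A ⊂ G ∧ G ⊆ B), M.mu' G B := by
  rw [mu', if_neg h, Finset.sum_attach _ (fun G => M.mu' G B)]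

lemma sum_mu' {A B : Finset M.E} (hA : A ∈ M.flats) (hB : B ∈ M.flats) (hAB : A ⊆ B) :
    ∑ E ∈ M.flats.filter (fun E => A ⊆ E ∧ E ⊆ B), M.mu' E B = if A = B then 1 else 0 := by
  by_cases h : A = B
  · subst h
    rw [if_pos rfl]
    have hs : M.flats.filter (fun E => A ⊆ E ∧ E ⊆ A) = {A} := by
      ext E
      simp only [Finset.mem_filter, Finset.mem_singleton]
      constructor
      · rintro ⟨_, h1, h2⟩; exact Finset.Subset.antisymm h2 h1
      · rintro rfl; exact ⟨hA, subset_rfl, subset_rfl⟩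
    rw [hs, Finset.sum_singleton, mu'_self]
  · rw [if_neg h]
    have hsplit : M.flats.filter (fun E => A ⊆ E ∧ E ⊆ B)
        = insert A (M.flats.filter (fun E => A ⊂ E ∧ E ⊆ B)) := by
      ext E
      simp only [Finset.mem_filter, Finset.mem_insert]
      constructor
      · rintro ⟨hE, h1, h2⟩
        rcases eq_or_ne A E with rfl | hne
        · exact Or.inl rfl
        · exact Or.inr ⟨hE, lt_of_le_of_ne h1 hne, h2⟩
      · rintro (rfl | ⟨hE, h1, h2⟩)
        · exact ⟨hA, subset_rfl, hAB⟩
        · exact ⟨hE, h1.subset, h2⟩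
    rw [hsplit, Finset.sum_insert (by
      intro hmem
      exact absurd (Finset.mem_filter.mp hmem).2.1 (fun a => a.2 a.1))]
    rw [mu'_of_ne h]
    exact neg_add_cancel _

end FinMatroid
namespace FinMatroid

open Polynomial Finset

variable {M : FinMatroid}

/-- Generic double-sum exchange over filtered index sets. -/
lemma sum_filter_comm {β : Type*} [AddCommMonoid β] {α : Type*} (s : Finset α)
    (p p' : α → Prop) (q q' : α → α → Prop)
    [DecidablePred p] [DecidablePred p'] [∀ x, DecidablePred (q x)] [∀ x, DecidablePred (q' x)]
    (h : ∀ x ∈ s, ∀ y ∈ s, (p x ∧ q x y) ↔ (p' y ∧ q' y x)) (f : α → α → β) :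
    ∑ x ∈ s.filter p, ∑ y ∈ s.filter (q x), f x y
      = ∑ y ∈ s.filter p', ∑ x ∈ s.filter (q' y), f x y := by
  have key : ∀ (p : α → Prop) (q : α → α → Prop) [DecidablePred p]
      [∀ x, DecidablePred (q x)] (f : α → α → β),
      ∑ x ∈ s.filter p, ∑ y ∈ s.filter (q x), f x y
        = ∑ x ∈ s, ∑ y ∈ s, if p x ∧ q x y then f x y else 0 := by
    intro p q _ _ f
    rw [Finset.sum_filter]
    refine Finset.sum_congr rfl fun x hx => ?_
    rw [Finset.sum_filter]
    by_cases hp : p x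
    · simp only [hp, if_true, true_and]
    · simp only [hp, if_false, false_and, Finset.sum_const_zero]
  rw [key p q f, key p' q' (fun y x => f x y), Finset.sum_comm]
  refine Finset.sum_congr rfl fun x hx => Finset.sum_congr rfl fun y hy => ?_
  exact if_congr (h y hy x hx) rfl rfl

lemma mu_eq_mu' {A B : Finset M.E} (hA : A ∈ M.flats) (hB : B ∈ M.flats) (hAB : A ⊆ B) :
    M.mu A B = M.mu' A B := by
  have calc1 : ∑ F ∈ M.flats.filter (fun F => A ⊆ F ∧ F ⊆ B),
      ∑ E ∈ M.flats.filter (fun E => A ⊆ E ∧ E ⊆ F), M.mu A E * M.mu' F B = M.mu' A B := by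
    have step : ∀ F ∈ M.flats.filter (fun F => A ⊆ F ∧ F ⊆ B),
        ∑ E ∈ M.flats.filter (fun E => A ⊆ E ∧ E ⊆ F), M.mu A E * M.mu' F B
          = if A = F then M.mu' F B else 0 := by
      intro F hF
      obtain ⟨hFf, h1, h2⟩ := Finset.mem_filter.mp hF
      rw [← Finset.sum_mul, sum_mu hA hFf h1, ite_mul, one_mul, zero_mul]
    rw [Finset.sum_congr rfl step, Finset.sum_ite_eq]
    rw [if_pos (Finset.mem_filter.mpr ⟨hA, subset_rfl, hAB⟩)]
  have calc2 : ∑ F ∈ M.flats.filter (fun F => A ⊆ F ∧ F ⊆ B),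
      ∑ E ∈ M.flats.filter (fun E => A ⊆ E ∧ E ⊆ F), M.mu A E * M.mu' F B = M.mu A B := by
    rw [sum_filter_comm M.flats (fun F => A ⊆ F ∧ F ⊆ B) (fun E => A ⊆ E ∧ E ⊆ B)
      (fun F E => A ⊆ E ∧ E ⊆ F) (fun E F => E ⊆ F ∧ F ⊆ B)
      (by
        intro F _ E _
        constructor
        · rintro ⟨⟨hAF, hFB⟩, hAE, hEF⟩
          exact ⟨⟨hAE, hEF.trans hFB⟩, hEF, hFB⟩
        · rintro ⟨⟨hAE, hEB⟩, hEF, hFB⟩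
          exact ⟨⟨hAE.trans hEF, hFB⟩, hAE, hEF⟩)
      (fun F E => M.mu A E * M.mu' F B)]
    have step : ∀ E ∈ M.flats.filter (fun E => A ⊆ E ∧ E ⊆ B),
        ∑ F ∈ M.flats.filter (fun F => E ⊆ F ∧ F ⊆ B), M.mu A E * M.mu' F B
          = if E = B then M.mu A E else 0 := by
      intro E hE
      obtain ⟨hEf, h1, h2⟩ := Finset.mem_filter.mp hE
      rw [← Finset.mul_sum, sum_mu' hEf hB h2, mul_ite, mul_one, mul_zero]
    rw [Finset.sum_congr rfl step]
    have : ∀ E ∈ M.flats.filter (fun E => A ⊆ E ∧ E ⊆ B),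
        (if E = B then M.mu A E else 0) = if B = E then M.mu A E else 0 := by
      intro E _
      exact if_congr eq_comm rfl rfl
    rw [Finset.sum_congr rfl this, Finset.sum_ite_eq]
    rw [if_pos (Finset.mem_filter.mpr ⟨hB, hAB, subset_rfl⟩)]
  rw [← calc2, calc1]

lemma sum_mu_right {E B : Finset M.E} (hE : E ∈ M.flats) (hB : B ∈ M.flats) (h : E ⊆ B) :
    ∑ F ∈ M.flats.filter (fun F => E ⊆ F ∧ F ⊆ B), M.mu F B = if E = B then 1 else 0 := by
  rw [← sum_mu' hE hB h]
  refine Finset.sum_congr rfl fun F hF => ?_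
  obtain ⟨hFf, _, h2⟩ := Finset.mem_filter.mp hF
  exact mu_eq_mu' hFf hB h2

/-- The characteristic polynomial of the "interval minor" between flats `F ⊆ G`. -/
noncomputable def chi (M : FinMatroid) (F G : Finset M.E) : Polynomial ℤ :=
  ∑ E ∈ M.flats.filter (fun E => F ⊆ E ∧ E ⊆ G),
    Polynomial.C (M.mu F E) * Polynomial.X ^ (M.rk G - M.rk E)

/-- The reversed interval characteristic polynomial. -/
noncomputable def chibar (M : FinMatroid) (F G : Finset M.E) : Polynomial ℤ :=
  ∑ E ∈ M.flats.filter (fun E => F ⊆ E ∧ E ⊆ G),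
    Polynomial.C (M.mu F E) * Polynomial.X ^ (M.rk E - M.rk F)

lemma filter_self_eq_singleton {F : Finset M.E} (hF : F ∈ M.flats) :
    M.flats.filter (fun E => F ⊆ E ∧ E ⊆ F) = {F} := by
  ext E
  simp only [Finset.mem_filter, Finset.mem_singleton]
  constructor
  · rintro ⟨_, h1, h2⟩; exact Finset.Subset.antisymm h2 h1
  · rintro rfl; exact ⟨hF, subset_rfl, subset_rfl⟩

lemma chi_self {F : Finset M.E} (hF : F ∈ M.flats) : M.chi F F = 1 := by
  rw [chi, filter_self_eq_singleton hF, Finset.sum_singleton, mu_self]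
  simp

lemma chibar_self {F : Finset M.E} (hF : F ∈ M.flats) : M.chibar F F = 1 := by
  rw [chibar, filter_self_eq_singleton hF, Finset.sum_singleton, mu_self]
  simp

lemma natDegree_chi_le {F G : Finset M.E} (hFG : F ⊆ G) :
    (M.chi F G).natDegree ≤ M.rk G - M.rk F := by
  refine Polynomial.natDegree_sum_le_of_forall_le _ _ fun E hE => ?_
  obtain ⟨_, h1, _⟩ := Finset.mem_filter.mp hE
  refine (Polynomial.natDegree_C_mul_le _ _).trans ?_
  rw [Polynomial.natDegree_X_pow]
  have := M.rk_mono h1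
  omega

lemma reflect_sum {α : Type*} (N : ℕ) (s : Finset α) (f : α → Polynomial ℤ) :
    Polynomial.reflect N (∑ i ∈ s, f i) = ∑ i ∈ s, Polynomial.reflect N (f i) := by
  classical
  induction s using Finset.induction with
  | empty => simp
  | @insert a s h ih => rw [Finset.sum_insert h, Finset.sum_insert h, Polynomial.reflect_add, ih]

lemma reflect_chi {F G : Finset M.E} (hFG : F ⊆ G) :
    Polynomial.reflect (M.rk G - M.rk F) (M.chi F G) = M.chibar F G := by
  rw [chi, chibar, reflect_sum]
  refine Finset.sum_congr rfl fun E hE => ?_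
  obtain ⟨_, h1, h2⟩ := Finset.mem_filter.mp hE
  have m1 := M.rk_mono h1
  have m2 := M.rk_mono h2
  rw [Polynomial.reflect_C_mul_X_pow, Polynomial.revAt_le (by omega)]
  congr 2
  omega

end FinMatroid
namespace FinMatroid

open Polynomial Finset

variable {M : FinMatroid}

lemma key_identity {F H : Finset M.E} (hF : F ∈ M.flats) (hH : H ∈ M.flats) (hFH : F ⊆ H) :
    ∑ G ∈ M.flats.filter (fun G => F ⊆ G ∧ G ⊆ H), M.chibar F G * M.chi G H
      = if F = H then (1 : Polynomial ℤ) else 0 := by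
  have expand : ∀ G ∈ M.flats.filter (fun G => F ⊆ G ∧ G ⊆ H),
      M.chibar F G * M.chi G H
        = ∑ E ∈ M.flats.filter (fun E => F ⊆ E ∧ E ⊆ G),
            ∑ K ∈ M.flats.filter (fun K => G ⊆ K ∧ K ⊆ H),
              (Polynomial.C (M.mu F E) * Polynomial.X ^ (M.rk E - M.rk F)) *
                (Polynomial.C (M.mu G K) * Polynomial.X ^ (M.rk H - M.rk K)) := by
    intro G _
    rw [chibar, chi, Finset.sum_mul_sum]
  rw [Finset.sum_congr rfl expand]
  rw [sum_filter_comm M.flats (fun G => F ⊆ G ∧ G ⊆ H) (fun E => F ⊆ E ∧ E ⊆ H)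
    (fun G E => F ⊆ E ∧ E ⊆ G) (fun E G => E ⊆ G ∧ G ⊆ H)
    (by
      intro G _ E _
      constructor
      · rintro ⟨⟨h1, h2⟩, h3, h4⟩
        exact ⟨⟨h3, h4.trans h2⟩, h4, h2⟩
      · rintro ⟨⟨h1, h2⟩, h3, h4⟩
        exact ⟨⟨h1.trans h3, h4⟩, h1, h3⟩)
    (fun G E => ∑ K ∈ M.flats.filter (fun K => G ⊆ K ∧ K ⊆ H),
      (Polynomial.C (M.mu F E) * Polynomial.X ^ (M.rk E - M.rk F)) *
        (Polynomial.C (M.mu G K) * Polynomial.X ^ (M.rk H - M.rk K)))]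
  have inner : ∀ E ∈ M.flats.filter (fun E => F ⊆ E ∧ E ⊆ H),
      (∑ G ∈ M.flats.filter (fun G => E ⊆ G ∧ G ⊆ H),
        ∑ K ∈ M.flats.filter (fun K => G ⊆ K ∧ K ⊆ H),
          (Polynomial.C (M.mu F E) * Polynomial.X ^ (M.rk E - M.rk F)) *
            (Polynomial.C (M.mu G K) * Polynomial.X ^ (M.rk H - M.rk K)))
        = Polynomial.C (M.mu F E) * Polynomial.X ^ (M.rk H - M.rk F) := by
    intro E hE
    obtain ⟨hEf, hFE, hEH⟩ := Finset.mem_filter.mp hE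
    rw [sum_filter_comm M.flats (fun G => E ⊆ G ∧ G ⊆ H) (fun K => E ⊆ K ∧ K ⊆ H)
      (fun G K => G ⊆ K ∧ K ⊆ H) (fun K G => E ⊆ G ∧ G ⊆ K)
      (by
        intro G _ K _
        constructor
        · rintro ⟨⟨h1, h2⟩, h3, h4⟩
          exact ⟨⟨h1.trans h3, h4⟩, h1, h3⟩
        · rintro ⟨⟨h1, h2⟩, h3, h4⟩
          exact ⟨⟨h3, h4.trans h2⟩, h4, h2⟩)
      (fun G K => (Polynomial.C (M.mu F E) * Polynomial.X ^ (M.rk E - M.rk F)) *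
        (Polynomial.C (M.mu G K) * Polynomial.X ^ (M.rk H - M.rk K)))]
    have innermost : ∀ K ∈ M.flats.filter (fun K => E ⊆ K ∧ K ⊆ H),
        (∑ G ∈ M.flats.filter (fun G => E ⊆ G ∧ G ⊆ K),
          (Polynomial.C (M.mu F E) * Polynomial.X ^ (M.rk E - M.rk F)) *
            (Polynomial.C (M.mu G K) * Polynomial.X ^ (M.rk H - M.rk K)))
          = if E = K then (Polynomial.C (M.mu F E) * Polynomial.X ^ (M.rk E - M.rk F)) *
              Polynomial.X ^ (M.rk H - M.rk K) else 0 := by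
      intro K hK
      obtain ⟨hKf, hEK, hKH⟩ := Finset.mem_filter.mp hK
      rw [← Finset.mul_sum, ← Finset.sum_mul, ← map_sum, sum_mu_right hEf hKf hEK]
      split_ifs with h
      · rw [map_one, one_mul, mul_assoc]
      · rw [map_zero, zero_mul, mul_zero]
    rw [Finset.sum_congr rfl innermost, Finset.sum_ite_eq]
    rw [if_pos (Finset.mem_filter.mpr ⟨hEf, subset_rfl, hEH⟩)]
    have m1 := M.rk_mono hFE
    have m2 := M.rk_mono hEH
    rw [mul_assoc, ← pow_add]
    congr 2
    omega
  rw [Finset.sum_congr rfl inner, ← Finset.sum_mul, ← map_sum, sum_mu hF hH hFH]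
  split_ifs with h
  · subst h
    simp
  · simp

end FinMatroid
namespace FinMatroid

open Polynomial Finset

/-- The Kazhdan–Lusztig polynomial of the contraction of `M` at the flat `F`,
defined by the Elias–Proudfoot–Wakefield recursion. -/
noncomputable def kl (M : FinMatroid) (F : Finset M.E) : Polynomial ℤ :=
  if h : M.rank ≤ M.rk F then 1
  else
    ∑ j ∈ Finset.range ((M.rank - M.rk F + 1) / 2),
      Polynomial.C
        (-(∑ G ∈ (M.flats.filter (fun G => F ⊂ G ∧ M.rk F < M.rk G)).attach,
            M.chi F G.1 * M.kl G.1).coeff j) * Polynomial.X ^ j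
termination_by M.rank - M.rk F
decreasing_by
  have h1 := (Finset.mem_filter.mp G.2).2.2
  have h2 := rk_le_rank (M := M) G.1
  omega

/-- The sum appearing on the right of the defining recursion. -/
noncomputable def Rpoly (M : FinMatroid) (F : Finset M.E) : Polynomial ℤ :=
  ∑ G ∈ M.flats.filter (fun G => F ⊂ G), M.chi F G * M.kl G

variable {M : FinMatroid}

lemma kl_of_rank_le {F : Finset M.E} (h : M.rank ≤ M.rk F) : M.kl F = 1 := by
  rw [kl, dif_pos h]

lemma kl_eq_trunc {F : Finset M.E} (hF : F ∈ M.flats) (h : M.rk F < M.rank) :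
    M.kl F = ∑ j ∈ Finset.range ((M.rank - M.rk F + 1) / 2),
      Polynomial.C (-(M.Rpoly F).coeff j) * Polynomial.X ^ j := by
  rw [kl, dif_neg (by omega)]
  have hfil : M.flats.filter (fun G => F ⊂ G ∧ M.rk F < M.rk G)
      = M.flats.filter (fun G => F ⊂ G) := by
    apply Finset.filter_congr
    intro G hG
    constructor
    · exact fun h' => h'.1
    · exact fun h' => ⟨h', rk_lt_of_ssubset (mem_flats.mp hF) h'⟩
  have hS : (∑ G ∈ (M.flats.filter (fun G => F ⊂ G ∧ M.rk F < M.rk G)).attach,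
      M.chi F G.1 * M.kl G.1) = M.Rpoly F := by
    rw [Finset.sum_attach _ (fun G => M.chi F G * M.kl G), hfil, Rpoly]
  rw [hS]

lemma coeff_trunc (n : ℕ) (c : ℕ → ℤ) (i : ℕ) :
    (∑ j ∈ Finset.range n, Polynomial.C (c j) * Polynomial.X ^ j).coeff i
      = if i < n then c i else 0 := by
  rw [Polynomial.finset_sum_coeff]
  have : ∀ j ∈ Finset.range n,
      (Polynomial.C (c j) * Polynomial.X ^ j).coeff i = if i = j then c j else 0 := by
    intro j _
    rw [Polynomial.coeff_C_mul, Polynomial.coeff_X_pow]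
    split_ifs <;> simp
  rw [Finset.sum_congr rfl this, Finset.sum_ite_eq]
  simp [Finset.mem_range]

lemma kl_natDegree_le (F : Finset M.E) : (M.kl F).natDegree ≤ M.rank - M.rk F := by
  rw [kl]
  split_ifs with h
  · simp
  · refine Polynomial.natDegree_sum_le_of_forall_le _ _ fun j hj => ?_
    have hj' := Finset.mem_range.mp hj
    refine (Polynomial.natDegree_C_mul_le _ _).trans ?_
    rw [Polynomial.natDegree_X_pow]
    omega

lemma kl_coeff_eq_zero {F : Finset M.E} (hF : F ∈ M.flats) (h : M.rk F < M.rank)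
    {i : ℕ} (hi : M.rank - M.rk F ≤ 2 * i) : (M.kl F).coeff i = 0 := by
  rw [kl_eq_trunc hF h, coeff_trunc, if_neg (by omega)]

lemma filter_subset_eq_insert {F : Finset M.E} (hF : F ∈ M.flats) :
    M.flats.filter (fun G => F ⊆ G) = insert F (M.flats.filter (fun G => F ⊂ G)) := by
  ext G
  simp only [Finset.mem_filter, Finset.mem_insert]
  constructor
  · rintro ⟨hGf, h1⟩
    rcases eq_or_ne F G with rfl | hne
    · exact Or.inl rfl
    · exact Or.inr ⟨hGf, lt_of_le_of_ne h1 hne⟩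
  · rintro (rfl | ⟨hGf, h1⟩)
    · exact ⟨hF, subset_rfl⟩
    · exact ⟨hGf, h1.subset⟩

lemma filter_between_eq_insert {F H : Finset M.E} (hF : F ∈ M.flats) (hFH : F ⊆ H) :
    M.flats.filter (fun G => F ⊆ G ∧ G ⊆ H)
      = insert F (M.flats.filter (fun G => F ⊂ G ∧ G ⊆ H)) := by
  ext G
  simp only [Finset.mem_filter, Finset.mem_insert]
  constructor
  · rintro ⟨hGf, h1, h2⟩
    rcases eq_or_ne F G with rfl | hne
    · exact Or.inl rfl
    · exact Or.inr ⟨hGf, lt_of_le_of_ne h1 hne, h2⟩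
  · rintro (rfl | ⟨hGf, h1, h2⟩)
    · exact ⟨hF, subset_rfl, hFH⟩
    · exact ⟨hGf, h1.subset, h2⟩

theorem reflect_kl {F : Finset M.E} (hF : F ∈ M.flats) :
    Polynomial.reflect (M.rank - M.rk F) (M.kl F)
      = ∑ G ∈ M.flats.filter (fun G => F ⊆ G), M.chi F G * M.kl G := by
  suffices H : ∀ n : ℕ, ∀ F : Finset M.E, F ∈ M.flats → M.rank - M.rk F ≤ n →
      Polynomial.reflect (M.rank - M.rk F) (M.kl F)
        = ∑ G ∈ M.flats.filter (fun G => F ⊆ G), M.chi F G * M.kl G from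
    H _ F hF le_rfl
  intro n
  induction n with
  | zero =>
    intro F hF hn
    have htop : M.rank ≤ M.rk F := by omega
    have hr0 : M.rank - M.rk F = 0 := by omega
    have hfil : M.flats.filter (fun G => F ⊆ G) = {F} := by
      ext G
      simp only [Finset.mem_filter, Finset.mem_singleton]
      constructor
      · rintro ⟨hGf, h1⟩
        by_contra hne
        have hlt := rk_lt_of_ssubset (mem_flats.mp hF) (lt_of_le_of_ne h1 (Ne.symm hne))
        have := rk_le_rank (M := M) G
        omega
      · rintro rfl; exact ⟨hF, subset_rfl⟩
    rw [hr0, kl_of_rank_le htop, hfil, Finset.sum_singleton, chi_self hF,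
      kl_of_rank_le htop, one_mul]
    have : (1 : Polynomial ℤ) = Polynomial.C 1 * Polynomial.X ^ 0 := by simp
    rw [this, Polynomial.reflect_C_mul_X_pow]
    simp
  | succ n IH =>
    intro F hF hn
    by_cases htop : M.rank ≤ M.rk F
    · -- same as base case
      have hr0 : M.rank - M.rk F = 0 := by omega
      have hfil : M.flats.filter (fun G => F ⊆ G) = {F} := by
        ext G
        simp only [Finset.mem_filter, Finset.mem_singleton]
        constructor
        · rintro ⟨hGf, h1⟩
          by_contra hne
          have hlt := rk_lt_of_ssubset (mem_flats.mp hF) (lt_of_le_of_ne h1 (Ne.symm hne))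
          have := rk_le_rank (M := M) G
          omega
        · rintro rfl; exact ⟨hF, subset_rfl⟩
      rw [hr0, kl_of_rank_le htop, hfil, Finset.sum_singleton, chi_self hF,
        kl_of_rank_le htop, one_mul]
      have : (1 : Polynomial ℤ) = Polynomial.C 1 * Polynomial.X ^ 0 := by simp
      rw [this, Polynomial.reflect_C_mul_X_pow]
      simp
    · push_neg at htop
      set r₀ := M.rank - M.rk F with hr₀def
      have hr₀pos : 1 ≤ r₀ := by omega
      -- antisymmetry of R
      have hrefR : Polynomial.reflect r₀ (M.Rpoly F) = -(M.Rpoly F) := by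
        rw [Rpoly, reflect_sum]
        have term : ∀ G ∈ M.flats.filter (fun G => F ⊂ G),
            Polynomial.reflect r₀ (M.chi F G * M.kl G)
              = ∑ H ∈ M.flats.filter (fun H => G ⊆ H),
                  M.chibar F G * (M.chi G H * M.kl H) := by
          intro G hG
          obtain ⟨hGf, hFG⟩ := Finset.mem_filter.mp hG
          have hrkFG : M.rk F < M.rk G := rk_lt_of_ssubset (mem_flats.mp hF) hFG
          have hrkG : M.rk G ≤ M.rank := rk_le_rank _
          have hsplit : r₀ = (M.rk G - M.rk F) + (M.rank - M.rk G) := by omega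
          rw [hsplit, Polynomial.reflect_mul _ _ (natDegree_chi_le hFG.subset)
            (kl_natDegree_le G), reflect_chi hFG.subset,
            IH G hGf (by omega), Finset.mul_sum]
        rw [Finset.sum_congr rfl term]
        rw [sum_filter_comm M.flats (fun G => F ⊂ G) (fun H => F ⊂ H) (fun G H => G ⊆ H)
          (fun H G => F ⊂ G ∧ G ⊆ H)
          (by
            intro G _ H _
            constructor
            · rintro ⟨h1, h2⟩
              exact ⟨lt_of_lt_of_le h1 h2, h1, h2⟩
            · rintro ⟨h1, h2, h3⟩
              exact ⟨h2, h3⟩)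
          (fun G H => M.chibar F G * (M.chi G H * M.kl H))]
        have inner : ∀ H ∈ M.flats.filter (fun H => F ⊂ H),
            (∑ G ∈ M.flats.filter (fun G => F ⊂ G ∧ G ⊆ H),
              M.chibar F G * (M.chi G H * M.kl H)) = -(M.chi F H * M.kl H) := by
          intro H hH
          obtain ⟨hHf, hFH⟩ := Finset.mem_filter.mp hH
          have e1 : ∑ G ∈ M.flats.filter (fun G => F ⊂ G ∧ G ⊆ H),
              M.chibar F G * M.chi G H = -(M.chi F H) := by
            have hk := key_identity hF hHf hFH.subset
            rw [filter_between_eq_insert hF hFH.subset,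
              Finset.sum_insert (by
                intro hmem
                exact absurd (Finset.mem_filter.mp hmem).2.1 (fun a => a.2 a.1)),
              chibar_self hF, one_mul, if_neg hFH.ne] at hk
            exact eq_neg_of_add_eq_zero_right hk
          calc (∑ G ∈ M.flats.filter (fun G => F ⊂ G ∧ G ⊆ H),
                M.chibar F G * (M.chi G H * M.kl H))
              = (∑ G ∈ M.flats.filter (fun G => F ⊂ G ∧ G ⊆ H),
                M.chibar F G * M.chi G H) * M.kl H := by
                rw [Finset.sum_mul]
                exact Finset.sum_congr rfl fun G _ => (mul_assoc _ _ _).symm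
            _ = -(M.chi F H * M.kl H) := by rw [e1, neg_mul]
        rw [Finset.sum_congr rfl inner, Finset.sum_neg_distrib]
      -- coefficient facts
      have hc1 : ∀ j, j ≤ r₀ → (M.Rpoly F).coeff (r₀ - j) = -((M.Rpoly F).coeff j) := by
        intro j hj
        have := congrArg (fun p => Polynomial.coeff p j) hrefR
        simpa [Polynomial.coeff_reflect, Polynomial.revAt_le hj] using this
      have hc2 : ∀ j, r₀ < j → (M.Rpoly F).coeff j = 0 := by
        intro j hj
        have := congrArg (fun p => Polynomial.coeff p j) hrefR
        simp only [Polynomial.coeff_reflect, Polynomial.revAt_eq_self_of_lt hj,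
          Polynomial.coeff_neg] at this
        omega
      -- conclude
      rw [filter_subset_eq_insert hF,
        Finset.sum_insert (by
          intro hmem
          exact absurd (Finset.mem_filter.mp hmem).2 (fun a => a.2 a.1)),
        chi_self hF, one_mul, ← Rpoly]
      rw [kl_eq_trunc hF (by omega)]
      apply Polynomial.ext
      intro i
      rw [Polynomial.coeff_reflect, Polynomial.coeff_add]
      by_cases hi : i ≤ r₀
      · rw [Polynomial.revAt_le hi, coeff_trunc, coeff_trunc]
        have e1 := hc1 i hi
        rcases lt_trichotomy (2 * i) r₀ with hcase | hcase | hcase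
        · have h1 : ¬(r₀ - i < (r₀ + 1) / 2) := by omega
          have h2 : i < (r₀ + 1) / 2 := by omega
          rw [if_neg h1, if_pos h2]
          omega
        · have h1 : ¬(r₀ - i < (r₀ + 1) / 2) := by omega
          have h2 : ¬(i < (r₀ + 1) / 2) := by omega
          rw [if_neg h1, if_neg h2]
          have hii : r₀ - i = i := by omega
          rw [hii] at e1
          omega
        · have h1 : r₀ - i < (r₀ + 1) / 2 := by omega
          have h2 : ¬(i < (r₀ + 1) / 2) := by omega
          rw [if_pos h1, if_neg h2]
          omega
      · have hlt : r₀ < i := by omega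
        rw [Polynomial.revAt_eq_self_of_lt hlt, coeff_trunc]
        have h2 : ¬(i < (r₀ + 1) / 2) := by omega
        rw [if_neg h2, hc2 i hlt]
        omega

end FinMatroid
namespace FinMatroid

open Polynomial Finset

variable {M : FinMatroid}

/-- The flat of `M` corresponding to a set of elements of the contraction `M^F`. -/
noncomputable def resMap (M : FinMatroid) (F : Finset M.E)
    (S : Finset {x : M.E // x ∉ F}) : Finset M.E :=
  S.map (Function.Embedding.subtype _) ∪ F

lemma mem_resMap {F : Finset M.E} {S : Finset {x : M.E // x ∉ F}} {x : M.E} :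
    x ∈ M.resMap F S ↔ (∃ h : x ∉ F, ⟨x, h⟩ ∈ S) ∨ x ∈ F := by
  simp only [resMap, Finset.mem_union, Finset.mem_map,
    Function.Embedding.coe_subtype]
  constructor
  · rintro (⟨⟨y, hy⟩, hyS, rfl⟩ | h)
    · exact Or.inl ⟨hy, hyS⟩
    · exact Or.inr h
  · rintro (⟨h, hS⟩ | h)
    · exact Or.inl ⟨⟨x, h⟩, hS, rfl⟩
    · exact Or.inr h

lemma subset_resMap {F : Finset M.E} (S : Finset {x : M.E // x ∉ F}) :
    F ⊆ M.resMap F S := Finset.subset_union_right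

lemma resMap_subset_resMap {F : Finset M.E} {S T : Finset {x : M.E // x ∉ F}} :
    M.resMap F S ⊆ M.resMap F T ↔ S ⊆ T := by
  constructor
  · intro h x hx
    have hx' : (x : M.E) ∈ M.resMap F S := mem_resMap.mpr (Or.inl ⟨x.2, by simpa using hx⟩)
    rcases mem_resMap.mp (h hx') with ⟨h1, h2⟩ | h1
    · simpa using h2
    · exact absurd h1 x.2
  · intro h
    exact Finset.union_subset_union_left (Finset.map_subset_map.mpr h)

lemma resMap_inj {F : Finset M.E} {S T : Finset {x : M.E // x ∉ F}}
    (h : M.resMap F S = M.resMap F T) : S = T :=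
  Finset.Subset.antisymm (resMap_subset_resMap.mp h.le) (resMap_subset_resMap.mp h.ge)

lemma resMap_ssubset_resMap {F : Finset M.E} {S T : Finset {x : M.E // x ∉ F}} :
    M.resMap F S ⊂ M.resMap F T ↔ S ⊂ T := by
  constructor
  · intro h
    refine ⟨resMap_subset_resMap.mp h.subset, fun hc => h.ne (le_antisymm h.subset
      (resMap_subset_resMap.mpr hc))⟩
  · intro h
    refine ⟨resMap_subset_resMap.mpr h.subset, fun hc => h.ne (le_antisymm h.subset
      (resMap_subset_resMap.mp hc))⟩

lemma rk_resMap {F : Finset M.E} (S : Finset {x : M.E // x ∉ F}) :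
    (M.restrictionAt F).rk S = M.rk (M.resMap F S) - M.rk F := rfl

lemma rk_le_rk_resMap {F : Finset M.E} (S : Finset {x : M.E // x ∉ F}) :
    M.rk F ≤ M.rk (M.resMap F S) := M.rk_mono (subset_resMap S)

lemma resMap_insert {F : Finset M.E} (x : {x : M.E // x ∉ F})
    (S : Finset {x : M.E // x ∉ F}) :
    M.resMap F (insert x S) = insert (x : M.E) (M.resMap F S) := by
  rw [resMap, Finset.map_insert, Finset.insert_union, resMap]
  rfl

lemma isFlat_res_iff {F : Finset M.E} (S : Finset {x : M.E // x ∉ F}) :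
    (M.restrictionAt F).IsFlat S ↔ M.IsFlat (M.resMap F S) := by
  constructor
  · intro h x hx
    rcases Classical.em (x ∈ F) with hxF | hxF
    · exact absurd (mem_resMap.mpr (Or.inr hxF)) hx
    · have hxS : (⟨x, hxF⟩ : {x : M.E // x ∉ F}) ∉ S := fun hc =>
        hx (mem_resMap.mpr (Or.inl ⟨hxF, hc⟩))
      have := h _ hxS
      rw [rk_resMap, rk_resMap, resMap_insert] at this
      have m1 := rk_le_rk_resMap (M := M) S
      have m2 := M.rk_mono (Finset.subset_insert x (M.resMap F S))
      intro hc
      rw [hc] at this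
      omega
  · intro h x hx
    have hx' : x.1 ∉ M.resMap F S := fun hc => by
      rcases mem_resMap.mp hc with ⟨h1, h2⟩ | h1
      · exact hx (by simpa using h2)
      · exact x.2 h1
    have h2 := h x.1 hx'
    show M.rk (M.resMap F (insert x S)) - M.rk F ≠ M.rk (M.resMap F S) - M.rk F
    rw [resMap_insert]
    have m1 := rk_le_rk_resMap (M := M) S
    have m2 := M.rk_mono (Finset.subset_insert x.1 (M.resMap F S))
    omega

lemma resMap_subtype {F E : Finset M.E} (hFE : F ⊆ E) :
    M.resMap F (E.subtype (fun x => x ∉ F)) = E := by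
  rw [resMap, Finset.subtype_map]
  ext x
  simp only [Finset.mem_union, Finset.mem_filter]
  constructor
  · rintro (⟨h1, _⟩ | h1)
    · exact h1
    · exact hFE h1
  · intro hx
    rcases Classical.em (x ∈ F) with h | h
    · exact Or.inr h
    · exact Or.inl ⟨hx, h⟩

/-- Transport of sums over flats of the contraction. -/
lemma sum_flats_res {F : Finset M.E} {A : Type*} [AddCommMonoid A]
    (q : Finset {x : M.E // x ∉ F} → Prop) (p : Finset M.E → Prop)
    [DecidablePred q] [DecidablePred p]
    (hpq : ∀ S, q S ↔ p (M.resMap F S)) (f : Finset M.E → A) :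
    ∑ S ∈ (M.restrictionAt F).flats.filter q, f (M.resMap F S)
      = ∑ E ∈ M.flats.filter (fun E => F ⊆ E ∧ p E), f E := by
  refine Finset.sum_nbij' (fun S => M.resMap F S) (fun E => E.subtype (fun x => x ∉ F))
    ?_ ?_ ?_ ?_ ?_
  · intro S hS
    obtain ⟨h1, h2⟩ := Finset.mem_filter.mp hS
    exact Finset.mem_filter.mpr ⟨mem_flats.mpr ((isFlat_res_iff S).mp (mem_flats.mp h1)),
      subset_resMap S, (hpq S).mp h2⟩
  · intro E hE
    obtain ⟨h1, h2, h3⟩ := Finset.mem_filter.mp hE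
    have he := resMap_subtype (M := M) h2
    refine Finset.mem_filter.mpr ⟨mem_flats.mpr ((isFlat_res_iff _).mpr ?_), (hpq _).mpr ?_⟩
    · rw [he]; exact mem_flats.mp h1
    · rw [he]; exact h3
  · intro S hS
    apply resMap_inj (F := F)
    rw [resMap_subtype (subset_resMap S)]
  · intro E hE
    exact resMap_subtype (Finset.mem_filter.mp hE).2.1
  · intro S hS
    rfl

lemma mu_res {F : Finset M.E} (A B : Finset {x : M.E // x ∉ F}) :
    (M.restrictionAt F).mu A B = M.mu (M.resMap F A) (M.resMap F B) := by
  suffices H : ∀ n : ℕ, ∀ B : Finset {x : M.E // x ∉ F}, B.card ≤ n →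
      ∀ A : Finset {x : M.E // x ∉ F},
      (M.restrictionAt F).mu A B = M.mu (M.resMap F A) (M.resMap F B) from
    H _ B le_rfl A
  intro n
  induction n using Nat.strong_induction_on with
  | _ n IH =>
    intro B hB A
    rcases eq_or_ne A B with rfl | hne
    · rw [mu_self, mu_self]
    · rw [mu_of_ne hne, mu_of_ne (fun hc => hne (resMap_inj hc))]
      congr 1
      have step : ∀ S ∈ (M.restrictionAt F).flats.filter (fun G => A ⊆ G ∧ G ⊂ B),
          (M.restrictionAt F).mu A S = M.mu (M.resMap F A) (M.resMap F S) := by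
        intro S hS
        obtain ⟨_, _, hSB⟩ := Finset.mem_filter.mp hS
        have hcard := Finset.card_lt_card hSB
        exact IH S.card (by omega) S le_rfl A
      refine (Finset.sum_congr rfl step).trans ?_
      refine (sum_flats_res (fun G => A ⊆ G ∧ G ⊂ B)
        (fun E => M.resMap F A ⊆ E ∧ E ⊂ M.resMap F B)
        (fun S => and_congr resMap_subset_resMap.symm resMap_ssubset_resMap.symm)
        (fun E => M.mu (M.resMap F A) E)).trans ?_
      apply Finset.sum_congr _ (fun _ _ => rfl)
      apply Finset.filter_congr
      intro E _
      constructor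
      · rintro ⟨_, h2⟩; exact h2
      · rintro ⟨h1, h2⟩
        exact ⟨(subset_resMap A).trans h1, h1, h2⟩

end FinMatroid
namespace FinMatroid

open Polynomial Finset

variable {M : FinMatroid}

lemma chi_res {F : Finset M.E} (A B : Finset {x : M.E // x ∉ F}) :
    (M.restrictionAt F).chi A B = M.chi (M.resMap F A) (M.resMap F B) := by
  rw [chi, chi]
  have step : ∀ S ∈ (M.restrictionAt F).flats.filter (fun E => A ⊆ E ∧ E ⊆ B),
      Polynomial.C ((M.restrictionAt F).mu A S) *
          Polynomial.X ^ ((M.restrictionAt F).rk B - (M.restrictionAt F).rk S)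
        = Polynomial.C (M.mu (M.resMap F A) (M.resMap F S)) *
            Polynomial.X ^ (M.rk (M.resMap F B) - M.rk (M.resMap F S)) := by
    intro S hS
    obtain ⟨_, _, hSB⟩ := Finset.mem_filter.mp hS
    rw [mu_res, rk_resMap, rk_resMap]
    have h1 := rk_le_rk_resMap (M := M) S
    have h2 := rk_le_rk_resMap (M := M) B
    have h3 := M.rk_mono (resMap_subset_resMap.mpr hSB)
    congr 2
    omega
  refine (Finset.sum_congr rfl step).trans ?_
  refine (sum_flats_res (fun E => A ⊆ E ∧ E ⊆ B)
    (fun E => M.resMap F A ⊆ E ∧ E ⊆ M.resMap F B)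
    (fun S => and_congr resMap_subset_resMap.symm resMap_subset_resMap.symm)
    (fun E => Polynomial.C (M.mu (M.resMap F A) E) *
      Polynomial.X ^ (M.rk (M.resMap F B) - M.rk E))).trans ?_
  apply Finset.sum_congr _ (fun _ _ => rfl)
  apply Finset.filter_congr
  intro E _
  constructor
  · rintro ⟨_, h2⟩; exact h2
  · rintro ⟨h1, h2⟩
    exact ⟨(subset_resMap A).trans h1, h1, h2⟩

lemma resMap_univ {F : Finset M.E} : M.resMap F Finset.univ = Finset.univ := by
  ext x
  simp only [mem_resMap, Finset.mem_univ, iff_true]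
  rcases Classical.em (x ∈ F) with h | h
  · exact Or.inr h
  · exact Or.inl ⟨h, trivial⟩

lemma rank_res {F : Finset M.E} : (M.restrictionAt F).rank = M.rank - M.rk F := by
  show M.rk (M.resMap F Finset.univ) - M.rk F = M.rank - M.rk F
  rw [resMap_univ, rank]

lemma loopless_res {F : Finset M.E} (hF : M.IsFlat F) :
    (M.restrictionAt F).Loopless := by
  intro x
  show M.rk (M.resMap F {x}) - M.rk F = 1
  have h1 : M.resMap F {x} = insert x.1 F := by
    rw [resMap, Finset.map_singleton, ← Finset.insert_eq]
    rfl
  have h2 := hF x.1 x.2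
  have h3 := M.rk_insert_le F x.1
  have h4 := M.rk_mono (Finset.subset_insert x.1 F)
  rw [h1]
  omega

lemma kl_res {F : Finset M.E} {G' : Finset {x : M.E // x ∉ F}}
    (hG' : (M.restrictionAt F).IsFlat G') :
    (M.restrictionAt F).kl G' = M.kl (M.resMap F G') := by
  suffices H : ∀ n : ℕ, ∀ G' : Finset {x : M.E // x ∉ F},
      (M.restrictionAt F).IsFlat G' → M.rank - M.rk (M.resMap F G') ≤ n →
      (M.restrictionAt F).kl G' = M.kl (M.resMap F G') from
    H _ G' hG' le_rfl
  intro n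
  induction n using Nat.strong_induction_on with
  | _ n IH =>
    intro G' hG' hn
    have hGflat : M.IsFlat (M.resMap F G') := (isFlat_res_iff G').mp hG'
    have hrkF : M.rk F ≤ M.rk (M.resMap F G') := rk_le_rk_resMap G'
    have hrkG : M.rk (M.resMap F G') ≤ M.rank := rk_le_rank _
    have hrank' : (M.restrictionAt F).rank = M.rank - M.rk F := rank_res
    have hrk' : (M.restrictionAt F).rk G' = M.rk (M.resMap F G') - M.rk F := rk_resMap G'
    by_cases htop : M.rank ≤ M.rk (M.resMap F G')
    · rw [kl_of_rank_le (by omega), kl_of_rank_le htop]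
    · push_neg at htop
      rw [kl_eq_trunc (mem_flats.mpr hG') (by omega),
        kl_eq_trunc (mem_flats.mpr hGflat) (by omega)]
      have hrange : ((M.restrictionAt F).rank - (M.restrictionAt F).rk G' + 1) / 2
          = (M.rank - M.rk (M.resMap F G') + 1) / 2 := by
        rw [hrank', hrk']
        congr 1
        omega
      have hR : (M.restrictionAt F).Rpoly G' = M.Rpoly (M.resMap F G') := by
        rw [Rpoly, Rpoly]
        have step : ∀ H' ∈ (M.restrictionAt F).flats.filter (fun H' => G' ⊂ H'),
            (M.restrictionAt F).chi G' H' * (M.restrictionAt F).kl H'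
              = (fun E => M.chi (M.resMap F G') E * M.kl E) (M.resMap F H') := by
          intro H' hH'
          obtain ⟨hH'f, hGH'⟩ := Finset.mem_filter.mp hH'
          have hsub : M.resMap F G' ⊂ M.resMap F H' := resMap_ssubset_resMap.mpr hGH'
          have hlt := rk_lt_of_ssubset hGflat hsub
          rw [chi_res, IH (M.rank - M.rk (M.resMap F H')) (by omega) H'
            (mem_flats.mp hH'f) le_rfl]
        refine (Finset.sum_congr rfl step).trans ?_
        refine (sum_flats_res (fun H' => G' ⊂ H') (fun E => M.resMap F G' ⊂ E)
          (fun S => resMap_ssubset_resMap.symm)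
          (fun E => M.chi (M.resMap F G') E * M.kl E)).trans ?_
        apply Finset.sum_congr _ (fun _ _ => rfl)
        apply Finset.filter_congr
        intro E _
        constructor
        · rintro ⟨_, h2⟩; exact h2
        · intro h2
          exact ⟨(subset_resMap G').trans h2.subset, h2⟩
      rw [hrange, hR]

end FinMatroid
namespace FinMatroid

open Polynomial Finset

variable {M : FinMatroid}

/-- The subset of `M` corresponding to a set of elements of the localization `M_F`. -/
noncomputable def locMap (M : FinMatroid) (F : Finset M.E)
    (S : Finset {x : M.E // x ∈ F}) : Finset M.E :=
  S.map (Function.Embedding.subtype _)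

lemma mem_locMap {F : Finset M.E} {S : Finset {x : M.E // x ∈ F}} {x : M.E} :
    x ∈ M.locMap F S ↔ ∃ h : x ∈ F, ⟨x, h⟩ ∈ S := by
  simp only [locMap, Finset.mem_map, Function.Embedding.coe_subtype]
  constructor
  · rintro ⟨⟨y, hy⟩, hyS, rfl⟩
    exact ⟨hy, hyS⟩
  · rintro ⟨h, hS⟩
    exact ⟨⟨x, h⟩, hS, rfl⟩

lemma locMap_subset_F {F : Finset M.E} (S : Finset {x : M.E // x ∈ F}) :
    M.locMap F S ⊆ F := fun x hx => (mem_locMap.mp hx).1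

lemma locMap_subset_locMap {F : Finset M.E} {S T : Finset {x : M.E // x ∈ F}} :
    M.locMap F S ⊆ M.locMap F T ↔ S ⊆ T := Finset.map_subset_map

lemma locMap_inj {F : Finset M.E} {S T : Finset {x : M.E // x ∈ F}}
    (h : M.locMap F S = M.locMap F T) : S = T :=
  Finset.Subset.antisymm (locMap_subset_locMap.mp h.le) (locMap_subset_locMap.mp h.ge)

lemma locMap_ssubset_locMap {F : Finset M.E} {S T : Finset {x : M.E // x ∈ F}} :
    M.locMap F S ⊂ M.locMap F T ↔ S ⊂ T := by
  constructor
  · intro h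
    refine ⟨locMap_subset_locMap.mp h.subset, fun hc => h.ne (le_antisymm h.subset
      (locMap_subset_locMap.mpr hc))⟩
  · intro h
    refine ⟨locMap_subset_locMap.mpr h.subset, fun hc => h.ne (le_antisymm h.subset
      (locMap_subset_locMap.mp hc))⟩

lemma rk_locMap {F : Finset M.E} (S : Finset {x : M.E // x ∈ F}) :
    (M.localization F).rk S = M.rk (M.locMap F S) := rfl

lemma locMap_insert {F : Finset M.E} (x : {x : M.E // x ∈ F})
    (S : Finset {x : M.E // x ∈ F}) :
    M.locMap F (insert x S) = insert (x : M.E) (M.locMap F S) := by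
  rw [locMap, Finset.map_insert, locMap]
  rfl

lemma isFlat_loc_iff {F : Finset M.E} (hF : M.IsFlat F) (S : Finset {x : M.E // x ∈ F}) :
    (M.localization F).IsFlat S ↔ M.IsFlat (M.locMap F S) := by
  constructor
  · intro h x hx
    by_cases hxF : x ∈ F
    · have hxS : (⟨x, hxF⟩ : {x : M.E // x ∈ F}) ∉ S := fun hc =>
        hx (mem_locMap.mpr ⟨hxF, hc⟩)
      have h2 := h _ hxS
      show M.rk (insert x (M.locMap F S)) ≠ M.rk (M.locMap F S)
      have e : (M.localization F).rk (insert ⟨x, hxF⟩ S) =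
          M.rk (insert x (M.locMap F S)) := by
        rw [rk_locMap, locMap_insert]
      rw [e, rk_locMap] at h2
      exact h2
    · intro hc
      have hsub : M.locMap F S ⊆ F := locMap_subset_F S
      have h1 : F ∪ insert x (M.locMap F S) = insert x F := by
        ext y
        simp only [Finset.mem_union, Finset.mem_insert]
        constructor
        · rintro (hy | hy | hy)
          · exact Or.inr hy
          · exact Or.inl hy
          · exact Or.inr (hsub hy)
        · rintro (hy | hy)
          · exact Or.inr (Or.inl hy)
          · exact Or.inl hy
      have h2 : F ∩ insert x (M.locMap F S) = M.locMap F S := by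
        ext y
        simp only [Finset.mem_inter, Finset.mem_insert]
        constructor
        · rintro ⟨hyF, hy | hy⟩
          · exact absurd (hy ▸ hyF) hxF
          · exact hy
        · intro hy
          exact ⟨hsub hy, Or.inr hy⟩
      have h3 := M.rk_submod F (insert x (M.locMap F S))
      rw [h1, h2, hc] at h3
      have h4 := M.rk_mono (Finset.subset_insert x F)
      exact hF x hxF (by omega)
  · intro h x hx
    have hx1 : x.1 ∉ M.locMap F S := fun hc => by
      obtain ⟨h1, h2⟩ := mem_locMap.mp hc
      exact hx (by simpa using h2)
    have h2 := h x.1 hx1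
    show M.rk (M.locMap F (insert x S)) ≠ M.rk (M.locMap F S)
    rw [locMap_insert]
    exact h2

lemma locMap_subtype {F E : Finset M.E} (hEF : E ⊆ F) :
    M.locMap F (E.subtype (fun x => x ∈ F)) = E := by
  rw [locMap, Finset.subtype_map]
  exact Finset.filter_true_of_mem (fun x hx => hEF hx)

lemma sum_flats_loc {F : Finset M.E} (hF : M.IsFlat F) {A : Type*} [AddCommMonoid A]
    (q : Finset {x : M.E // x ∈ F} → Prop) (p : Finset M.E → Prop)
    [DecidablePred q] [DecidablePred p]
    (hpq : ∀ S, q S ↔ p (M.locMap F S)) (f : Finset M.E → A) :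
    ∑ S ∈ (M.localization F).flats.filter q, f (M.locMap F S)
      = ∑ E ∈ M.flats.filter (fun E => E ⊆ F ∧ p E), f E := by
  refine Finset.sum_nbij' (fun S => M.locMap F S) (fun E => E.subtype (fun x => x ∈ F))
    ?_ ?_ ?_ ?_ ?_
  · intro S hS
    obtain ⟨h1, h2⟩ := Finset.mem_filter.mp hS
    exact Finset.mem_filter.mpr ⟨mem_flats.mpr ((isFlat_loc_iff hF S).mp (mem_flats.mp h1)),
      locMap_subset_F S, (hpq S).mp h2⟩
  · intro E hE
    obtain ⟨h1, h2, h3⟩ := Finset.mem_filter.mp hE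
    have he := locMap_subtype (M := M) h2
    refine Finset.mem_filter.mpr ⟨mem_flats.mpr ((isFlat_loc_iff hF _).mpr ?_), (hpq _).mpr ?_⟩
    · rw [he]; exact mem_flats.mp h1
    · rw [he]; exact h3
  · intro S hS
    apply locMap_inj (F := F)
    rw [locMap_subtype (locMap_subset_F S)]
  · intro E hE
    exact locMap_subtype (Finset.mem_filter.mp hE).2.1
  · intro S hS
    rfl

lemma mu_loc {F : Finset M.E} (hF : M.IsFlat F) (A B : Finset {x : M.E // x ∈ F}) :
    (M.localization F).mu A B = M.mu (M.locMap F A) (M.locMap F B) := by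
  suffices H : ∀ n : ℕ, ∀ B : Finset {x : M.E // x ∈ F}, B.card ≤ n →
      ∀ A : Finset {x : M.E // x ∈ F},
      (M.localization F).mu A B = M.mu (M.locMap F A) (M.locMap F B) from
    H _ B le_rfl A
  intro n
  induction n using Nat.strong_induction_on with
  | _ n IH =>
    intro B hB A
    rcases eq_or_ne A B with rfl | hne
    · rw [mu_self, mu_self]
    · rw [mu_of_ne hne, mu_of_ne (fun hc => hne (locMap_inj hc))]
      congr 1
      have step : ∀ S ∈ (M.localization F).flats.filter (fun G => A ⊆ G ∧ G ⊂ B),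
          (M.localization F).mu A S = M.mu (M.locMap F A) (M.locMap F S) := by
        intro S hS
        obtain ⟨_, _, hSB⟩ := Finset.mem_filter.mp hS
        have hcard := Finset.card_lt_card hSB
        exact IH S.card (by omega) S le_rfl A
      refine (Finset.sum_congr rfl step).trans ?_
      refine (sum_flats_loc hF (fun G => A ⊆ G ∧ G ⊂ B)
        (fun E => M.locMap F A ⊆ E ∧ E ⊂ M.locMap F B)
        (fun S => and_congr locMap_subset_locMap.symm locMap_ssubset_locMap.symm)
        (fun E => M.mu (M.locMap F A) E)).trans ?_
      apply Finset.sum_congr _ (fun _ _ => rfl)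
      apply Finset.filter_congr
      intro E _
      constructor
      · rintro ⟨_, h2⟩; exact h2
      · rintro ⟨h1, h2⟩
        exact ⟨h2.subset.trans (locMap_subset_F B), h1, h2⟩

lemma rank_loc {F : Finset M.E} : (M.localization F).rank = M.rk F := by
  show M.rk (M.locMap F Finset.univ) = M.rk F
  congr 1
  ext x
  simp only [mem_locMap]
  constructor
  · rintro ⟨h, _⟩; exact h
  · intro h; exact ⟨h, Finset.mem_univ _⟩

lemma charPoly_loc {F : Finset M.E} (hF : F ∈ M.flats) :
    (M.localization F).charPoly = M.chi ∅ F := by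
  rw [charPoly, chi]
  have hfil : (M.localization F).flats
      = (M.localization F).flats.filter (fun _ => True) := by
    simp
  rw [hfil]
  have step : ∀ S ∈ (M.localization F).flats.filter (fun _ => True),
      Polynomial.C ((M.localization F).mu ∅ S) *
          Polynomial.X ^ ((M.localization F).rank - (M.localization F).rk S)
        = (fun E => Polynomial.C (M.mu ∅ E) * Polynomial.X ^ (M.rk F - M.rk E))
            (M.locMap F S) := by
    intro S _
    have h1 : M.locMap F (∅ : Finset {x : M.E // x ∈ F}) = ∅ := by
      simp [locMap]
    rw [mu_loc (mem_flats.mp hF), h1, rank_loc, rk_locMap]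
  refine (Finset.sum_congr rfl step).trans ?_
  refine (sum_flats_loc (mem_flats.mp hF) (fun _ => True) (fun _ => True)
    (fun _ => Iff.rfl)
    (fun E => Polynomial.C (M.mu ∅ E) * Polynomial.X ^ (M.rk F - M.rk E))).trans ?_
  apply Finset.sum_congr _ (fun _ _ => rfl)
  apply Finset.filter_congr
  intro E _
  constructor
  · rintro ⟨h1, _⟩; exact ⟨Finset.empty_subset _, h1⟩
  · rintro ⟨_, h2⟩; exact ⟨h2, trivial⟩

end FinMatroid
namespace FinMatroid

open Polynomial Finset

variable {M : FinMatroid}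

lemma natDegree_reflect_le {p : Polynomial ℤ} {n : ℕ} (hp : p.natDegree ≤ n) :
    (Polynomial.reflect n p).natDegree ≤ n := by
  rw [Polynomial.natDegree_le_iff_coeff_eq_zero]
  intro N hN
  rw [Polynomial.coeff_reflect, Polynomial.revAt_eq_self_of_lt hN]
  exact Polynomial.coeff_eq_zero_of_natDegree_lt (lt_of_le_of_lt hp hN)

lemma aeval_reflect (p : Polynomial ℤ) {n : ℕ} (hp : p.natDegree ≤ n) (q : ℚ)
    (hq : q ≠ 0) :
    Polynomial.aeval q (Polynomial.reflect n p) = q ^ n * Polynomial.aeval q⁻¹ p := by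
  rw [Polynomial.aeval_eq_sum_range' (n := n + 1)
    (lt_of_le_of_lt (natDegree_reflect_le hp) (Nat.lt_succ_self n)) q,
    Polynomial.aeval_eq_sum_range' (n := n + 1)
    (lt_of_le_of_lt hp (Nat.lt_succ_self n)) q⁻¹, Finset.mul_sum]
  rw [← Finset.sum_range_reflect]
  refine Finset.sum_congr rfl fun i hi => ?_
  have hi' : i ≤ n := Nat.lt_succ_iff.mp (Finset.mem_range.mp hi)
  have e1 : n + 1 - 1 - i = n - i := by omega
  rw [e1, Polynomial.coeff_reflect, Polynomial.revAt_le (by omega)]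
  have e2 : n - (n - i) = i := by omega
  rw [e2, zsmul_eq_mul, zsmul_eq_mul, inv_pow]
  rw [pow_sub₀ q hq hi']
  ring

lemma poly_eq_of_aeval_eq {p1 p2 : Polynomial ℤ}
    (h : ∀ q : ℚ, q ≠ 0 → Polynomial.aeval q p1 = Polynomial.aeval q p2) : p1 = p2 := by
  have hmap : p1.map (algebraMap ℤ ℚ) = p2.map (algebraMap ℤ ℚ) := by
    apply Polynomial.eq_of_infinite_eval_eq
    apply Set.Infinite.mono (s := {(0 : ℚ)}ᶜ)
    · intro q hq
      have := h q hq
      rw [Polynomial.aeval_def, Polynomial.aeval_def, ← Polynomial.eval_map,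
        ← Polynomial.eval_map] at this
      exact this
    · exact (Set.finite_singleton 0).infinite_compl
  exact Polynomial.map_injective _ (fun a b hab => by exact_mod_cast hab) hmap

lemma resMap_empty {F : Finset M.E} : M.resMap F ∅ = F := by
  simp [resMap]

lemma isFlat_res_empty {F : Finset M.E} (hF : M.IsFlat F) :
    (M.restrictionAt F).IsFlat ∅ := by
  rw [isFlat_res_iff, resMap_empty]
  exact hF

lemma rk_pos_of_flat_ne_empty (hLL : M.Loopless) {F : Finset M.E} (hne : F ≠ ∅) :
    1 ≤ M.rk F := by
  obtain ⟨x, hx⟩ := Finset.nonempty_iff_ne_empty.mpr hne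
  have h1 := hLL x
  have h2 := M.rk_mono (Finset.singleton_subset_iff.mpr hx)
  omega

/-- The Kazhdan–Lusztig family given by our construction. -/
noncomputable def klP : FinMatroid → Polynomial ℤ := fun M => M.kl ∅

theorem klP_isKLFamily : IsKLFamily klP := by
  refine ⟨?_, ?_, ?_⟩
  · intro M _ h0
    exact kl_of_rank_le (by rw [M.rk_empty]; omega)
  · intro M hLL hpos i hi
    exact kl_coeff_eq_zero (empty_mem_flats hLL) (by rw [M.rk_empty]; omega)
      (by rw [M.rk_empty]; omega)
  · intro M hLL q hq
    have hbot : ∅ ∈ M.flats := empty_mem_flats hLL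
    have hrk0 : M.rk ∅ = 0 := M.rk_empty
    have hdeg : (M.kl ∅).natDegree ≤ M.rank := by
      have := kl_natDegree_le (M := M) ∅
      omega
    have hmain := reflect_kl hbot
    rw [hrk0, Nat.sub_zero] at hmain
    have hklP : klP M = M.kl ∅ := rfl
    rw [hklP, ← aeval_reflect _ hdeg q hq, hmain, map_sum]
    have hfil : M.flats.filter (fun G => ∅ ⊆ G) = M.flats :=
      Finset.filter_true_of_mem (fun _ _ => Finset.empty_subset _)
    rw [hfil]
    refine Finset.sum_congr rfl fun F hF => ?_
    rw [map_mul, charPoly_loc hF]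
    have h2 : klP (M.restrictionAt F) = M.kl F := by
      show (M.restrictionAt F).kl ∅ = M.kl F
      rw [kl_res (isFlat_res_empty (mem_flats.mp hF)), resMap_empty]
    rw [h2]

theorem klFamily_unique {P Q : FinMatroid → Polynomial ℤ}
    (hP : IsKLFamily P) (hQ : IsKLFamily Q) :
    ∀ M : FinMatroid, M.Loopless → Q M = P M := by
  suffices H : ∀ n : ℕ, ∀ M : FinMatroid, M.Loopless → M.rank ≤ n → Q M = P M from
    fun M h => H _ M h le_rfl
  intro n
  induction n using Nat.strong_induction_on with
  | _ n IH =>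
    intro M hLL hn
    by_cases h0 : M.rank = 0
    · rw [hQ.1 M hLL h0, hP.1 M hLL h0]
    · have hpos : 0 < M.rank := Nat.pos_of_ne_zero h0
      have hD2 : ∀ i, M.rank ≤ 2 * i → (Q M - P M).coeff i = 0 := by
        intro i hi
        rw [Polynomial.coeff_sub, hQ.2.1 M hLL hpos i hi, hP.2.1 M hLL hpos i hi, sub_self]
      have hdeg : (Q M - P M).natDegree ≤ M.rank := by
        rw [Polynomial.natDegree_le_iff_coeff_eq_zero]
        intro N hN
        exact hD2 N (by omega)
      have hbot : ∅ ∈ M.flats := empty_mem_flats hLL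
      have hbotflat := empty_isFlat hLL
      have hLL' : (M.restrictionAt ∅).Loopless := loopless_res hbotflat
      have hrank' : (M.restrictionAt ∅).rank = M.rank := by
        rw [rank_res, M.rk_empty, Nat.sub_zero]
      have hq3 : ∀ q : ℚ, q ≠ 0 →
          Polynomial.aeval q (Polynomial.reflect M.rank (Q M - P M))
            = Polynomial.aeval q (Q (M.restrictionAt ∅) - P (M.restrictionAt ∅)) := by
        intro q hq
        have e1 := hQ.2.2 M hLL q hq
        have e2 := hP.2.2 M hLL q hq
        have e3 : q ^ M.rank * Polynomial.aeval q⁻¹ (Q M - P M)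
            = ∑ F ∈ M.flats, Polynomial.aeval q ((M.localization F).charPoly) *
                Polynomial.aeval q (Q (M.restrictionAt F) - P (M.restrictionAt F)) := by
          rw [map_sub, mul_sub, e1, e2, ← Finset.sum_sub_distrib]
          refine Finset.sum_congr rfl fun F _ => ?_
          rw [map_sub, mul_sub]
        have hzero : ∀ F ∈ M.flats.erase ∅,
            Polynomial.aeval q ((M.localization F).charPoly) *
              Polynomial.aeval q (Q (M.restrictionAt F) - P (M.restrictionAt F)) = 0 := by
          intro F hF'
          obtain ⟨hne, hFf⟩ := Finset.mem_erase.mp hF'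
          have hFflat := mem_flats.mp hFf
          have hrkpos := rk_pos_of_flat_ne_empty hLL hne
          have hrkF : (M.restrictionAt F).rank = M.rank - M.rk F := rank_res
          have heq : Q (M.restrictionAt F) = P (M.restrictionAt F) := by
            refine IH (M.restrictionAt F).rank ?_ _ (loopless_res hFflat) le_rfl
            rw [hrkF]
            omega
          rw [heq, sub_self, map_zero, mul_zero]
        rw [← Finset.add_sum_erase _ _ hbot, Finset.sum_eq_zero hzero, add_zero,
          charPoly_loc hbot, chi_self hbot, map_one, one_mul] at e3
        rw [aeval_reflect _ hdeg q hq, e3]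
      have hpoly : Polynomial.reflect M.rank (Q M - P M)
          = Q (M.restrictionAt ∅) - P (M.restrictionAt ∅) := poly_eq_of_aeval_eq hq3
      have hfin : Q M - P M = 0 := by
        apply Polynomial.ext
        intro i
        rw [Polynomial.coeff_zero]
        rcases le_or_gt M.rank (2 * i) with hcase | hcase
        · exact hD2 i hcase
        · have hi : i ≤ M.rank := by omega
          have := congrArg (fun p => Polynomial.coeff p (M.rank - i)) hpoly
          simp only [Polynomial.coeff_reflect,
            Polynomial.revAt_le (show M.rank - i ≤ M.rank by omega)] at this
          have e2 : M.rank - (M.rank - i) = i := by omega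
          rw [e2] at this
          have hD'2 : (Q (M.restrictionAt ∅) - P (M.restrictionAt ∅)).coeff (M.rank - i)
              = 0 := by
            rw [Polynomial.coeff_sub,
              hQ.2.1 _ hLL' (by omega) _ (by rw [hrank']; omega),
              hP.2.1 _ hLL' (by omega) _ (by rw [hrank']; omega), sub_self]
          rw [hD'2] at this
          exact this
      exact sub_eq_zero.mp hfin

end FinMatroid
/-- There is a unique way to assign to each loopless matroid `M` a
polynomial `P_M(t) ∈ ℤ[t]` satisfying the three defining conditions of the
Kazhdan–Lusztig polynomial. -/
theorem klFamily_exists_unique :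
    ∃ P : FinMatroid → Polynomial ℤ, FinMatroid.IsKLFamily P ∧
      ∀ Q : FinMatroid → Polynomial ℤ, FinMatroid.IsKLFamily Q →
        ∀ M : FinMatroid, M.Loopless → Q M = P M :=
  ⟨FinMatroid.klP, FinMatroid.klP_isKLFamily,
    fun Q hQ M hM => FinMatroid.klFamily_unique FinMatroid.klP_isKLFamily hQ M hM⟩
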